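/- Let (H,α) be a monoidal Hom-bialgebra over a commutative ring k and let (M,μ), (N,ν), (P,π) be right-right Yetter-Drinfel'd (H,α)-Hom-modules. Equip tensor products of Yetter-Drinfel'd Hom-modules with the diagonal action (m⊗n)◁h=m◁h₁⊗n◁h₂ and codiagonal coaction (m⊗n)↦(m₍₀₎⊗n₍₀₎)⊗m₍₁₎n₍₁₎. Then the k-linear map ã:(M⊗N)⊗P→M⊗(N⊗P), ã((m⊗n)⊗p)=μ(m)⊗(n⊗π⁻¹(p)), is bijective, right H-linear (ã(((m⊗n)⊗p)◁h)=ã((m⊗n)⊗p)◁h), and right H-colinear. -/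
import Mathlib


open TensorProduct

noncomputable def tmul2 {k A B C D E F : Type*} [CommRing k]
    [AddCommGroup A] [AddCommGroup B] [AddCommGroup C] [AddCommGroup D]
    [AddCommGroup E] [AddCommGroup F]
    [Module k A] [Module k B] [Module k C] [Module k D] [Module k E] [Module k F]
    (f : A →ₗ[k] C →ₗ[k] E) (g : B →ₗ[k] D →ₗ[k] F) :
    (A ⊗[k] B) →ₗ[k] (C ⊗[k] D) →ₗ[k] (E ⊗[k] F) :=
  TensorProduct.curry
    ((TensorProduct.map (TensorProduct.lift f) (TensorProduct.lift g)) ∘ₗ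
      (TensorProduct.tensorTensorTensorComm k A B C D).toLinearMap)

/-- A monoidal Hom-bialgebra over a commutative ring `k`. -/
structure MonHomBialg (k H : Type*) [CommRing k] [AddCommGroup H] [Module k H] where
  α : H ≃ₗ[k] H
  mul : H →ₗ[k] H →ₗ[k] H
  one : H
  comul : H →ₗ[k] H ⊗[k] H
  counit : H →ₗ[k] k
  alpha_mul : ∀ g h, α (mul g h) = mul (α g) (α h)
  alpha_one : α one = one
  hom_assoc : ∀ g h l, mul (α g) (mul h l) = mul (mul g h) (α l)
  mul_one' : ∀ h, mul h one = α h
  one_mul' : ∀ h, mul one h = α h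
  comul_alpha : ∀ h, comul (α h)
    = TensorProduct.map α.toLinearMap α.toLinearMap (comul h)
  counit_alpha : ∀ h, counit (α h) = counit h
  hom_coassoc : ∀ h,
    (TensorProduct.assoc k H H H) ((TensorProduct.map comul α.symm.toLinearMap) (comul h))
      = (TensorProduct.map α.symm.toLinearMap comul) (comul h)
  counit_comul_left : ∀ h,
    (TensorProduct.lid k H) ((TensorProduct.map counit LinearMap.id) (comul h)) = α.symm h
  counit_comul_right : ∀ h,
    (TensorProduct.rid k H) ((TensorProduct.map LinearMap.id counit) (comul h)) = α.symm h
  comul_mul : ∀ g h, comul (mul g h) = tmul2 mul mul (comul g) (comul h)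
  comul_one : comul one = one ⊗ₜ[k] one
  counit_mul : ∀ g h, counit (mul g h) = counit g * counit h
  counit_one : counit one = 1

/-- A right-right Yetter-Drinfel'd Hom-module over `MonHomBialg`. -/
structure YDmodB {k H : Type*} [CommRing k] [AddCommGroup H] [Module k H]
    (A : MonHomBialg k H) (N : Type*) [AddCommGroup N] [Module k N] where
  ν : N ≃ₗ[k] N
  act : N →ₗ[k] H →ₗ[k] N
  act_assoc : ∀ n g h, act (ν n) (A.mul g h) = act (act n g) (A.α h)
  act_one : ∀ n, act n A.one = ν n
  nu_act : ∀ n h, ν (act n h) = act (ν n) (A.α h)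
  coact : N →ₗ[k] N ⊗[k] H
  coact_coassoc : ∀ n,
    (TensorProduct.map coact A.α.symm.toLinearMap) (coact n)
      = (TensorProduct.assoc k N H H).symm
          ((TensorProduct.map ν.symm.toLinearMap A.comul) (coact n))
  coact_counit : ∀ n,
    (TensorProduct.rid k N) ((TensorProduct.map (LinearMap.id : N →ₗ[k] N) A.counit) (coact n))
      = ν.symm n
  coact_nu : ∀ n, coact (ν n) = TensorProduct.map ν.toLinearMap A.α.toLinearMap (coact n)
  yd : ∀ n h,
    tmul2 (act.compl₂ A.α.symm.toLinearMap) (A.mul.compl₂ A.α.symm.toLinearMap)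
        (coact n) (A.comul h)
      = ((TensorProduct.map (LinearMap.id : N →ₗ[k] N)
            (A.α.symm.toLinearMap ∘ₗ TensorProduct.lift A.mul)) ∘ₗ
          (TensorProduct.leftComm k H N H).toLinearMap)
          ((TensorProduct.map (LinearMap.id : H →ₗ[k] H) (coact ∘ₗ act n)) (A.comul h))

/-- The diagonal right Hom-action on a tensor product: `(m ⊗ n) ◁ h = (m ◁ h₁) ⊗ (n ◁ h₂)`. -/
noncomputable def dAct {k H M N : Type*} [CommRing k] [AddCommGroup H] [Module k H]
    [AddCommGroup M] [Module k M] [AddCommGroup N] [Module k N]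
    (A : MonHomBialg k H)
    (actM : M →ₗ[k] H →ₗ[k] M) (actN : N →ₗ[k] H →ₗ[k] N) :
    (M ⊗[k] N) →ₗ[k] H →ₗ[k] (M ⊗[k] N) :=
  (tmul2 actM actN).compl₂ A.comul

/-- The codiagonal right Hom-coaction on a tensor product:
`(m ⊗ n) ↦ (m₍₀₎ ⊗ n₍₀₎) ⊗ m₍₁₎ n₍₁₎`. -/
noncomputable def dCoact {k H M N : Type*} [CommRing k] [AddCommGroup H] [Module k H]
    [AddCommGroup M] [Module k M] [AddCommGroup N] [Module k N]
    (A : MonHomBialg k H)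
    (cM : M →ₗ[k] M ⊗[k] H) (cN : N →ₗ[k] N ⊗[k] H) :
    (M ⊗[k] N) →ₗ[k] (M ⊗[k] N) ⊗[k] H :=
  (TensorProduct.map (LinearMap.id : M ⊗[k] N →ₗ[k] M ⊗[k] N) (TensorProduct.lift A.mul)) ∘ₗ
    (TensorProduct.tensorTensorTensorComm k M H N H).toLinearMap ∘ₗ
    (TensorProduct.map cM cN)

/-- The Hom-associator `ã((m ⊗ n) ⊗ p) = μ(m) ⊗ (n ⊗ π⁻¹(p))`. -/
noncomputable def aYD {k M N P : Type*} [CommRing k]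
    [AddCommGroup M] [Module k M] [AddCommGroup N] [Module k N] [AddCommGroup P] [Module k P]
    (νM : M ≃ₗ[k] M) (νP : P ≃ₗ[k] P) :
    ((M ⊗[k] N) ⊗[k] P) →ₗ[k] (M ⊗[k] (N ⊗[k] P)) :=
  (TensorProduct.map νM.toLinearMap
      (TensorProduct.map (LinearMap.id : N →ₗ[k] N) νP.symm.toLinearMap)) ∘ₗ
    (TensorProduct.assoc k M N P).toLinearMap


section Helpers
variable {k H : Type*} [CommRing k] [AddCommGroup H] [Module k H] {A : MonHomBialg k H}

lemma tmul2_tmul {A B C D E F : Type*}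
    [AddCommGroup A] [AddCommGroup B] [AddCommGroup C] [AddCommGroup D]
    [AddCommGroup E] [AddCommGroup F]
    [Module k A] [Module k B] [Module k C] [Module k D] [Module k E] [Module k F]
    (f : A →ₗ[k] C →ₗ[k] E) (g : B →ₗ[k] D →ₗ[k] F) (a : A) (b : B) (c : C) (d : D) :
    tmul2 f g (a ⊗ₜ[k] b) (c ⊗ₜ[k] d) = f a c ⊗ₜ[k] g b d := by
  simp [tmul2]

lemma YDmodB.act_inv {N : Type*} [AddCommGroup N] [Module k N] (Y : YDmodB A N)
    (n : N) (h : H) : Y.ν.symm (Y.act n h) = Y.act (Y.ν.symm n) (A.α.symm h) := by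
  apply Y.ν.injective
  rw [Y.nu_act, LinearEquiv.apply_symm_apply, LinearEquiv.apply_symm_apply,
    LinearEquiv.apply_symm_apply]

lemma YDmodB.coact_inv {N : Type*} [AddCommGroup N] [Module k N] (Y : YDmodB A N)
    (n : N) : Y.coact (Y.ν.symm n) =
      TensorProduct.map Y.ν.symm.toLinearMap A.α.symm.toLinearMap (Y.coact n) := by
  have h1 := Y.coact_nu (Y.ν.symm n)
  rw [LinearEquiv.apply_symm_apply] at h1
  rw [h1, ← LinearMap.comp_apply, ← TensorProduct.map_comp]
  simp

end Helpers
section Bij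
variable {k : Type*} [CommRing k] {M N P : Type*}
    [AddCommGroup M] [Module k M] [AddCommGroup N] [Module k N] [AddCommGroup P] [Module k P]

lemma aYD_bijective (νM : M ≃ₗ[k] M) (νP : P ≃ₗ[k] P) :
    Function.Bijective (aYD (N := N) νM νP) := by
  have : aYD (N := N) νM νP =
      ((TensorProduct.assoc k M N P) ≪≫ₗ
        (TensorProduct.congr νM (TensorProduct.congr (LinearEquiv.refl k N) νP.symm))).toLinearMap := by
    ext m n p
    simp [aYD]
  rw [this]
  exact LinearEquiv.bijective _

lemma aYD_tmul (νM : M ≃ₗ[k] M) (νP : P ≃ₗ[k] P) (m : M) (n : N) (p : P) :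
    aYD νM νP ((m ⊗ₜ[k] n) ⊗ₜ[k] p) = νM m ⊗ₜ[k] (n ⊗ₜ[k] νP.symm p) := by
  simp [aYD]
end Bij
section Part2
variable {k H : Type*} [CommRing k] [AddCommGroup H] [Module k H] (A : MonHomBialg k H)
    {M N P : Type*} [AddCommGroup M] [Module k M] [AddCommGroup N] [Module k N]
    [AddCommGroup P] [Module k P]

lemma dAct_apply (actM : M →ₗ[k] H →ₗ[k] M) (actN : N →ₗ[k] H →ₗ[k] N)
    (x : M ⊗[k] N) (h : H) :
    dAct A actM actN x h = tmul2 actM actN x (A.comul h) := rfl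

lemma hlin_pure (YM : YDmodB A M) (YN : YDmodB A N) (YP : YDmodB A P)
    (m : M) (n : N) (p : P) (h : H) :
    aYD (N := N) YM.ν YP.ν (dAct A (dAct A YM.act YN.act) YP.act ((m ⊗ₜ[k] n) ⊗ₜ[k] p) h)
      = dAct A YM.act (dAct A YN.act YP.act)
          (aYD (N := N) YM.ν YP.ν ((m ⊗ₜ[k] n) ⊗ₜ[k] p)) h := by
  set S : H ⊗[k] H →ₗ[k] M ⊗[k] N := tmul2 YM.act YN.act (m ⊗ₜ[k] n) with hS
  set T : H ⊗[k] H →ₗ[k] N ⊗[k] P := tmul2 YN.act YP.act (n ⊗ₜ[k] YP.ν.symm p) with hT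
  set E₁ : (H ⊗[k] H) ⊗[k] H →ₗ[k] M ⊗[k] (N ⊗[k] P) :=
    (aYD (N := N) YM.ν YP.ν) ∘ₗ (TensorProduct.map S (YP.act p)) ∘ₗ
      (TensorProduct.map (LinearMap.id : H ⊗[k] H →ₗ[k] H ⊗[k] H) A.α.toLinearMap) with hE₁
  set E₂ : H ⊗[k] (H ⊗[k] H) →ₗ[k] M ⊗[k] (N ⊗[k] P) :=
    (TensorProduct.map (YM.act (YM.ν m)) T) ∘ₗ
      (TensorProduct.map A.α.toLinearMap (LinearMap.id : H ⊗[k] H →ₗ[k] H ⊗[k] H)) with hE₂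
  have stepA : aYD (N := N) YM.ν YP.ν
      (dAct A (dAct A YM.act YN.act) YP.act ((m ⊗ₜ[k] n) ⊗ₜ[k] p) h)
      = E₁ ((TensorProduct.map A.comul A.α.symm.toLinearMap) (A.comul h)) := by
    have : (aYD (N := N) YM.ν YP.ν) ∘ₗ
        (tmul2 (dAct A YM.act YN.act) YP.act ((m ⊗ₜ[k] n) ⊗ₜ[k] p))
        = E₁ ∘ₗ (TensorProduct.map A.comul A.α.symm.toLinearMap) := by
      ext u v
      simp [hE₁, hS, dAct_apply, tmul2_tmul]
    rw [dAct_apply]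
    exact LinearMap.congr_fun this (A.comul h)
  have stepB : dAct A YM.act (dAct A YN.act YP.act)
      (aYD (N := N) YM.ν YP.ν ((m ⊗ₜ[k] n) ⊗ₜ[k] p)) h
      = E₂ ((TensorProduct.map A.α.symm.toLinearMap A.comul) (A.comul h)) := by
    have : (tmul2 YM.act (dAct A YN.act YP.act) (YM.ν m ⊗ₜ[k] (n ⊗ₜ[k] YP.ν.symm p)))
        = E₂ ∘ₗ (TensorProduct.map A.α.symm.toLinearMap A.comul) := by
      ext u v
      simp [hE₂, hT, dAct_apply, tmul2_tmul]
    rw [aYD_tmul, dAct_apply]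
    exact LinearMap.congr_fun this (A.comul h)
  rw [stepA, stepB, ← A.hom_coassoc h]
  have key : E₁ = E₂ ∘ₗ (TensorProduct.assoc k H H H).toLinearMap := by
    ext a b c
    simp [hE₁, hE₂, hS, hT, tmul2_tmul, aYD_tmul, YM.nu_act, YP.act_inv]
  rw [key]
  rfl
end Part2
section Part3
variable {k H : Type*} [CommRing k] [AddCommGroup H] [Module k H] (A : MonHomBialg k H)
    {M N P : Type*} [AddCommGroup M] [Module k M] [AddCommGroup N] [Module k N]
    [AddCommGroup P] [Module k P]

lemma dCoact_tmul (cM : M →ₗ[k] M ⊗[k] H) (cN : N →ₗ[k] N ⊗[k] H) (a : M) (b : N) :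
    dCoact A cM cN (a ⊗ₜ[k] b)
      = (TensorProduct.map (LinearMap.id : M ⊗[k] N →ₗ[k] M ⊗[k] N)
          (TensorProduct.lift A.mul))
          ((TensorProduct.tensorTensorTensorComm k M H N H) (cM a ⊗ₜ[k] cN b)) := by
  simp [dCoact]

lemma hcolin_pure (YM : YDmodB A M) (YN : YDmodB A N) (YP : YDmodB A P)
    (m : M) (n : N) (p : P) :
    dCoact A YM.coact (dCoact A YN.coact YP.coact)
        (aYD (N := N) YM.ν YP.ν ((m ⊗ₜ[k] n) ⊗ₜ[k] p))
      = (TensorProduct.map (aYD (N := N) YM.ν YP.ν) (LinearMap.id : H →ₗ[k] H))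
          (dCoact A (dCoact A YM.coact YN.coact) YP.coact ((m ⊗ₜ[k] n) ⊗ₜ[k] p)) := by
  rw [aYD_tmul, dCoact_tmul, dCoact_tmul, dCoact_tmul, dCoact_tmul,
    YM.coact_nu, YP.coact_inv]
  generalize YM.coact m = u
  generalize YN.coact n = v
  generalize YP.coact p = w
  induction u using TensorProduct.induction_on with
  | zero => simp
  | add x y hx hy => simp only [map_add, add_tmul, tmul_add, hx, hy]
  | tmul m₀ m₁ =>
    induction v using TensorProduct.induction_on with
    | zero => simp
    | add x y hx hy => simp only [map_add, add_tmul, tmul_add, hx, hy]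
    | tmul n₀ n₁ =>
      induction w using TensorProduct.induction_on with
      | zero => simp
      | add x y hx hy => simp only [map_add, add_tmul, tmul_add, hx, hy]
      | tmul p₀ p₁ =>
        simp [aYD_tmul, A.hom_assoc]
end Part3

/-- the Hom-associator `ã((m⊗n)⊗p) = μ(m)⊗(n⊗π⁻¹(p))` is a bijective,
right `H`-linear and right `H`-colinear map of Yetter-Drinfel'd Hom-modules. -/
theorem associator_yetter_drinfeld {k H : Type*} [CommRing k] [AddCommGroup H] [Module k H]
    (A : MonHomBialg k H) {M N P : Type*} [AddCommGroup M] [Module k M]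
    [AddCommGroup N] [Module k N] [AddCommGroup P] [Module k P]
    (YM : YDmodB A M) (YN : YDmodB A N) (YP : YDmodB A P) :
    Function.Bijective (aYD (N := N) YM.ν YP.ν) ∧
    (∀ (x : (M ⊗[k] N) ⊗[k] P) (h : H),
      aYD (N := N) YM.ν YP.ν (dAct A (dAct A YM.act YN.act) YP.act x h)
        = dAct A YM.act (dAct A YN.act YP.act) (aYD (N := N) YM.ν YP.ν x) h) ∧
    (∀ x : (M ⊗[k] N) ⊗[k] P,
      dCoact A YM.coact (dCoact A YN.coact YP.coact) (aYD (N := N) YM.ν YP.ν x)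
        = (TensorProduct.map (aYD (N := N) YM.ν YP.ν) (LinearMap.id : H →ₗ[k] H))
            (dCoact A (dCoact A YM.coact YN.coact) YP.coact x)) := by
  refine ⟨aYD_bijective YM.ν YP.ν, ?_, ?_⟩
  · intro x h
    induction x using TensorProduct.induction_on with
    | zero => simp
    | add x y hx hy => simp only [map_add, LinearMap.add_apply, hx, hy]
    | tmul mn p =>
      induction mn using TensorProduct.induction_on with
      | zero => simp
      | add x y hx hy => simp only [add_tmul, map_add, LinearMap.add_apply, hx, hy]
      | tmul m n => exact hlin_pure A YM YN YP m n p h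
  · intro x
    induction x using TensorProduct.induction_on with
    | zero => simp
    | add x y hx hy => simp only [map_add, hx, hy]
    | tmul mn p =>
      induction mn using TensorProduct.induction_on with
      | zero => simp
      | add x y hx hy => simp only [add_tmul, map_add, hx, hy]
      | tmul m n => exact hcolin_pure A YM YN YP m n p
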